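/- (Theorem 2, sufficiency) Let L be a quasicontinuous domain, (x_j)_{j∈J} a net in L, I an ideal on J, and x ∈ L. Then (x_j) GZS-converges to x with respect to I if and only if (x_j) I-converges to x in the Scott topology σ(L); in particular, generalized ideal inf-limit convergence on L is topological. -/

import Mathlib

open Set

universe u v

variable {L : Type u}

/-- The upper set `↑A = {y : ∃ a ∈ A, a ≤ y}`. -/
def upSet [Preorder L] (A : Set L) : Set L := {y | ∃ a ∈ A, a ≤ y}

/-- The lower set `↓A = {y : ∃ a ∈ A, y ≤ a}`. -/
def downSet [Preorder L] (A : Set L) : Set L := {y | ∃ a ∈ A, y ≤ a}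

/-- An ideal on `J`: a family of subsets closed under subsets and finite unions. -/
def IsIdeal {J : Type v} (I : Set (Set J)) : Prop :=
  (∀ A ∈ I, ∀ B : Set J, B ⊆ A → B ∈ I) ∧ ∀ A ∈ I, ∀ B ∈ I, A ∪ B ∈ I

/-- A (nonempty) directed family of nonempty finite subsets of `L`. -/
def DirectedFamily [Preorder L] (𝓕 : Set (Set L)) : Prop :=
  𝓕.Nonempty ∧ (∀ F ∈ 𝓕, F.Nonempty ∧ F.Finite) ∧
    ∀ E ∈ 𝓕, ∀ F ∈ 𝓕, ∃ H ∈ 𝓕, upSet H ⊆ upSet E ∩ upSet F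

/-- A dcpo: every nonempty directed subset has a supremum. -/
def IsDcpo (L : Type u) [PartialOrder L] : Prop :=
  ∀ D : Set L, D.Nonempty → DirectedOn (· ≤ ·) D → ∃ s, IsLUB D s

/-- A net index: a nonempty directed preordered set. -/
def IsNetIndex (J : Type v) [Preorder J] : Prop :=
  Nonempty J ∧ ∀ a b : J, ∃ c, a ≤ c ∧ b ≤ c

/-- The net `xj` GZS-converges (generalized ideal inf-limit) to `x` w.r.t. ideal `I`. -/
def GZSConv [Preorder L] {J : Type v} (xj : J → L) (I : Set (Set J)) (x : L) : Prop :=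
  ∃ 𝓕 : Set (Set L), DirectedFamily 𝓕 ∧ (⋂ F ∈ 𝓕, upSet F) ⊆ upSet {x} ∧
    ∀ F ∈ 𝓕, {j | xj j ∉ upSet F} ∈ I

/-- The net `xj` IS-converges (ideal inf-limit) to `x` w.r.t. ideal `I`. -/
def ISConv [Preorder L] {J : Type v} (xj : J → L) (I : Set (Set J)) (x : L) : Prop :=
  ∃ D : Set L, D.Nonempty ∧ DirectedOn (· ≤ ·) D ∧ (∃ s, IsLUB D s ∧ x ≤ s) ∧
    ∀ d ∈ D, {j | xj j ∉ upSet {d}} ∈ I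

/-- `G ≪ x` for a set `G`: every nonempty directed `D` with `x ≤ sup D` meets `↑G`. -/
def WayBelowSet [Preorder L] (G : Set L) (x : L) : Prop :=
  ∀ D : Set L, D.Nonempty → DirectedOn (· ≤ ·) D →
    ∀ s, IsLUB D s → x ≤ s → (D ∩ upSet G).Nonempty

/-- Scott open set. -/
def ScottOpen [Preorder L] (U : Set L) : Prop :=
  (∀ x ∈ U, ∀ y, x ≤ y → y ∈ U) ∧
    ∀ D : Set L, D.Nonempty → DirectedOn (· ≤ ·) D →
      ∀ s, IsLUB D s → s ∈ U → (D ∩ U).Nonempty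

/-- `fin(x)`: the nonempty finite subsets way below `x`. -/
def finOf [Preorder L] (x : L) : Set (Set L) :=
  {F | F.Nonempty ∧ F.Finite ∧ WayBelowSet F x}

/-- Quasicontinuous domain. -/
def QuasicontinuousDomain (L : Type u) [PartialOrder L] : Prop :=
  IsDcpo L ∧ ∀ x : L, DirectedFamily (finOf x) ∧ upSet {x} = ⋂ F ∈ finOf x, upSet F

/-- Ideal convergence of a net w.r.t. a topology `T`. -/
def IConv [Preorder L] {J : Type v} (T : TopologicalSpace L) (xj : J → L)
    (I : Set (Set J)) (x : L) : Prop :=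
  ∀ U : Set L, T.IsOpen U → x ∈ U → {j | xj j ∉ U} ∈ I

/-- The net `xj` GS-converges (generalized inf-limit) to `x`. -/
def GSConv [Preorder L] {J : Type v} [Preorder J] (xj : J → L) (x : L) : Prop :=
  ∃ 𝓕 : Set (Set L), DirectedFamily 𝓕 ∧ (⋂ F ∈ 𝓕, upSet F) ⊆ upSet {x} ∧
    ∀ F ∈ 𝓕, ∃ k : J, ∀ j : J, k ≤ j → xj j ∈ upSet F

/-- The generalized inf-limit topology `τ^{g-lim-inf}`. -/
def tauGLimInf (L : Type u) [PartialOrder L] : Set (Set L) :=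
  {U | ∀ (J : Type u) [Preorder J], IsNetIndex J →
      ∀ xj : J → L, ∀ x ∈ U, GSConv xj x → ∃ k : J, ∀ j : J, k ≤ j → xj j ∈ U}

/-- The generalized ideal inf-limit topology `τ^{g-I-lim-inf}`. -/
def tauGILimInf (L : Type u) [PartialOrder L] : Set (Set L) :=
  {U | ∀ (J : Type u) [Preorder J], IsNetIndex J →
      ∀ (xj : J → L) (I : Set (Set J)), IsIdeal I →
      ∀ x ∈ U, GZSConv xj I x → {j | xj j ∉ U} ∈ I}

/-- `x = glim_GZ (x_j)`: generalized ideal eventual-lower-bound limit. -/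
def GlimGZ [Preorder L] {J : Type v} (xj : J → L) (I : Set (Set J)) (x : L) : Prop :=
  GZSConv xj I x ∧
    ∀ F : Set L, F.Nonempty → F.Finite → {j | xj j ∉ upSet F} ∈ I → x ∈ upSet F

/-- The generalized ideal eventual-lower-bound limit topology `τ^{g-I}`. -/
def tauGIlb (L : Type u) [PartialOrder L] : Set (Set L) :=
  {U | ∀ (J : Type u) [Preorder J], IsNetIndex J →
      ∀ (xj : J → L) (I : Set (Set J)), IsIdeal I →
      ∀ x ∈ U, GlimGZ xj I x → {j | xj j ∉ U} ∈ I}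

/-- The Scott topology `σ(L)`. -/
def scottTop (L : Type u) [Preorder L] : TopologicalSpace L :=
  TopologicalSpace.generateFrom {U | ScottOpen U}

/-- The Lawson topology `λ(L) = σ(L) ∨ ω(L)`. -/
def lawsonTop (L : Type u) [Preorder L] : TopologicalSpace L :=
  TopologicalSpace.generateFrom ({U | ScottOpen U} ∪ {V | ∃ x : L, V = (upSet {x})ᶜ})

/-- Meet-continuity of a dcpo. -/
def MeetContinuous (L : Type u) [PartialOrder L] : Prop :=
  ∀ x : L, ∀ D : Set L, D.Nonempty → DirectedOn (· ≤ ·) D →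
    ∀ s, IsLUB D s → x ≤ s → x ∈ @closure L (scottTop L) (downSet {x} ∩ downSet D)

/-- Continuous domain: `⇓x` is nonempty, directed, with supremum `x`. -/
def ContinuousDomain (L : Type u) [PartialOrder L] : Prop :=
  IsDcpo L ∧ ∀ x : L, {y : L | WayBelowSet {y} x}.Nonempty ∧
    DirectedOn (· ≤ ·) {y : L | WayBelowSet {y} x} ∧ IsLUB {y : L | WayBelowSet {y} x} x


section Aux

variable {L : Type u}

lemma subset_upSet' [Preorder L] (A : Set L) : A ⊆ upSet A :=
  fun a ha => ⟨a, ha, le_refl a⟩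

lemma upSet_upper [Preorder L] {A : Set L} {x y : L} (hx : x ∈ upSet A) (hxy : x ≤ y) :
    y ∈ upSet A := by
  obtain ⟨a, ha, hax⟩ := hx
  exact ⟨a, ha, hax.trans hxy⟩

lemma upSet_min [Preorder L] {A B : Set L} (h : A ⊆ upSet B) : upSet A ⊆ upSet B := by
  rintro y ⟨a, haA, hay⟩
  obtain ⟨b, hb, hba⟩ := h haA
  exact ⟨b, hb, hba.trans hay⟩

/-- Intersection of a nonempty chain of sets each meeting a finite set still meets it. -/
lemma chain_inter_finite {α : Type*} {c : Set (Set α)} (hc : IsChain (· ⊆ ·) c)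
    (hcne : c.Nonempty) {F : Set α} (hF : F.Finite)
    (h : ∀ M ∈ c, (M ∩ F).Nonempty) : (⋂₀ c ∩ F).Nonempty := by
  classical
  set T : Set (Set α) := (fun M => M ∩ F) '' c with hT
  have hTfin : T.Finite := hF.finite_subsets.subset (by rintro t ⟨M, _, rfl⟩; exact inter_subset_right)
  have hTne : T.Nonempty := hcne.image _
  obtain ⟨t0, ht0T, ht0min⟩ := Set.Finite.exists_minimalFor id T hTfin hTne
  simp only [id_eq] at ht0min
  obtain ⟨M0, hM0c, rfl⟩ := ht0T
  have hsub : ∀ M ∈ c, M0 ∩ F ⊆ M := by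
    intro M hMc
    rcases eq_or_ne M M0 with rfl | hne
    · exact inter_subset_left
    rcases hc hMc hM0c hne with hMM0 | hM0M
    · have h2 : M ∩ F ⊆ M0 ∩ F := fun y hy => ⟨hMM0 hy.1, hy.2⟩
      have heq : (M0 ∩ F : Set α) = M ∩ F := Set.Subset.antisymm (ht0min ⟨M, hMc, rfl⟩ h2) h2
      rw [heq]; exact inter_subset_left
    · exact fun y hy => hM0M hy.1
  obtain ⟨y, hyM0, hyF⟩ := h M0 hM0c
  exact ⟨y, Set.mem_sInter.2 fun M hM => hsub M hM ⟨hyM0, hyF⟩, hyF⟩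

/-- **Rudin's Lemma.** -/
lemma rudin_lemma [Preorder L] {𝓕 : Set (Set L)} (h𝓕 : DirectedFamily 𝓕) :
    ∃ D : Set L, D.Nonempty ∧ DirectedOn (· ≤ ·) D ∧ D ⊆ ⋃₀ 𝓕 ∧
      ∀ F ∈ 𝓕, (D ∩ F).Nonempty := by
  classical
  obtain ⟨h𝓕ne, h𝓕fin, h𝓕dir⟩ := h𝓕
  -- the admissible sets
  set S : Set (Set L) := {M | M ⊆ ⋃₀ 𝓕 ∧ (∀ F ∈ 𝓕, (M ∩ F).Nonempty) ∧
    ∀ E ∈ 𝓕, ∀ F ∈ 𝓕, upSet F ⊆ upSet E → ∀ m ∈ M ∩ F, ∃ e ∈ M ∩ E, e ≤ m} with hS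
  have hbase : (⋃₀ 𝓕) ∈ S := by
    refine ⟨Set.Subset.rfl, fun F hF => ?_, ?_⟩
    · obtain ⟨f, hf⟩ := (h𝓕fin F hF).1
      exact ⟨f, ⟨F, hF, hf⟩, hf⟩
    · intro E hE F hF hEF m hm
      have : m ∈ upSet E := hEF (subset_upSet' F hm.2)
      obtain ⟨e, heE, hem⟩ := this
      exact ⟨e, ⟨⟨E, hE, heE⟩, heE⟩, hem⟩
  obtain ⟨M, _, hMS, hMmin⟩ := by
    refine zorn_superset_nonempty S ?_ (⋃₀ 𝓕) hbase
    intro c hcS hchain hcne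
    refine ⟨⋂₀ c, ⟨?_, ?_, ?_⟩, fun s hs => Set.sInter_subset_of_mem hs⟩
    · obtain ⟨M0, hM0⟩ := hcne
      exact (Set.sInter_subset_of_mem hM0).trans (hcS hM0).1
    · intro F hF
      exact (chain_inter_finite hchain hcne (h𝓕fin F hF).2
        (fun M hM => (hcS hM).2.1 F hF)).mono (fun y hy => hy)
    · intro E hE F hF hEF m hm
      have key : (⋂₀ c ∩ {e | e ∈ E ∧ e ≤ m}).Nonempty := by
        refine chain_inter_finite hchain hcne ((h𝓕fin E hE).2.subset (fun e he => he.1)) ?_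
        intro M hM
        have hmM : m ∈ M ∩ F := ⟨Set.mem_sInter.1 hm.1 M hM, hm.2⟩
        obtain ⟨e, heME, hem⟩ := (hcS hM).2.2 E hE F hF hEF m hmM
        exact ⟨e, heME.1, heME.2, hem⟩
      obtain ⟨e, hec, heE, hem⟩ := key
      exact ⟨e, ⟨hec, heE⟩, hem⟩
  obtain ⟨hMsub, hMmeets, hMcond⟩ := hMS
  -- key claim: each m ∈ M has a witness F with M ∩ F ⊆ ↑m
  have claim : ∀ m ∈ M, ∃ F ∈ 𝓕, ∀ a ∈ M ∩ F, m ≤ a := by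
    intro m hm
    by_contra hcon
    push_neg at hcon
    set M' : Set L := {a | a ∈ M ∧ ¬ m ≤ a} with hM'
    have hM'S : M' ∈ S := by
      refine ⟨fun a ha => hMsub ha.1, ?_, ?_⟩
      · intro F hF
        obtain ⟨a, haMF, ham⟩ := hcon F hF
        exact ⟨a, ⟨haMF.1, ham⟩, haMF.2⟩
      · intro E hE F hF hEF a ha
        obtain ⟨e, heME, hea⟩ := hMcond E hE F hF hEF a ⟨ha.1.1, ha.2⟩
        have : ¬ m ≤ e := fun hme => ha.1.2 (hme.trans hea)
        exact ⟨e, ⟨⟨heME.1, this⟩, heME.2⟩, hea⟩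
    have hM'M : M' ⊆ M := fun a ha => ha.1
    have hmM' : m ∈ M' := hMmin hM'S hM'M hm
    exact hmM'.2 (le_refl m)
  refine ⟨M, ?_, ?_, hMsub, hMmeets⟩
  · obtain ⟨F, hF⟩ := h𝓕ne
    exact (hMmeets F hF).mono (fun y hy => hy.1)
  · intro m1 hm1 m2 hm2
    obtain ⟨F1, hF1, hF1w⟩ := claim m1 hm1
    obtain ⟨F2, hF2, hF2w⟩ := claim m2 hm2
    obtain ⟨H, hH, hHsub⟩ := h𝓕dir F1 hF1 F2 hF2
    obtain ⟨h, hhM, hhH⟩ := hMmeets H hH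
    obtain ⟨e1, he1, he1h⟩ := hMcond F1 hF1 H hH (fun y hy => (hHsub hy).1) h ⟨hhM, hhH⟩
    obtain ⟨e2, he2, he2h⟩ := hMcond F2 hF2 H hH (fun y hy => (hHsub hy).2) h ⟨hhM, hhH⟩
    exact ⟨h, hhM, (hF1w e1 he1).trans he1h, (hF2w e2 he2).trans he2h⟩

/-- Rudin's lemma, avoiding an upper set that contains no member of the family. -/
lemma rudin_avoid [Preorder L] {𝓕 : Set (Set L)} (h𝓕 : DirectedFamily 𝓕)
    {V : Set L} (hV : ∀ x ∈ V, ∀ y, x ≤ y → y ∈ V) (hne : ∀ F ∈ 𝓕, ¬ F ⊆ V) :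
    ∃ D : Set L, D.Nonempty ∧ DirectedOn (· ≤ ·) D ∧ (∀ d ∈ D, d ∉ V) ∧
      ∀ F ∈ 𝓕, ∃ d ∈ D, d ∈ F := by
  obtain ⟨h𝓕ne, h𝓕fin, h𝓕dir⟩ := h𝓕
  set 𝓕' : Set (Set L) := (fun F => F \ V) '' 𝓕 with h𝓕'
  have h𝓕'df : DirectedFamily 𝓕' := by
    refine ⟨h𝓕ne.image _, ?_, ?_⟩
    · rintro F' ⟨F, hF, rfl⟩
      refine ⟨?_, (h𝓕fin F hF).2.subset diff_subset⟩
      obtain ⟨f, hf⟩ := not_subset.1 (hne F hF)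
      exact ⟨f, hf.1, hf.2⟩
    · rintro E' ⟨E, hE, rfl⟩ F' ⟨F, hF, rfl⟩
      obtain ⟨H, hH, hHsub⟩ := h𝓕dir E hE F hF
      refine ⟨H \ V, ⟨H, hH, rfl⟩, ?_⟩
      rintro y ⟨h, ⟨hhH, hhV⟩, hhy⟩
      have hyE : y ∈ upSet (E \ V) := by
        obtain ⟨e, heE, heh⟩ := (hHsub (subset_upSet' H hhH)).1
        have : e ∉ V := fun heV => hhV (hV e heV h heh)
        exact ⟨e, ⟨heE, this⟩, heh.trans hhy⟩
      have hyF : y ∈ upSet (F \ V) := by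
        obtain ⟨f, hfF, hfh⟩ := (hHsub (subset_upSet' H hhH)).2
        have : f ∉ V := fun hfV => hhV (hV f hfV h hfh)
        exact ⟨f, ⟨hfF, this⟩, hfh.trans hhy⟩
      exact ⟨hyE, hyF⟩
  obtain ⟨D, hDne, hDdir, hDsub, hDmeets⟩ := rudin_lemma h𝓕'df
  refine ⟨D, hDne, hDdir, ?_, ?_⟩
  · intro d hd
    obtain ⟨F', ⟨F, _, rfl⟩, hdF'⟩ := hDsub hd
    exact hdF'.2
  · intro F hF
    obtain ⟨d, hdD, hdF⟩ := hDmeets (F \ V) ⟨F, hF, rfl⟩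
    exact ⟨d, hdD, hdF.1⟩

/-- In a dcpo a Scott open set containing `⋂ ↑F` contains some `↑F`. -/
lemma scott_approx [PartialOrder L] (hdcpo : IsDcpo L) {𝓕 : Set (Set L)}
    (h𝓕 : DirectedFamily 𝓕) {U : Set L} (hU : ScottOpen U)
    (hsub : (⋂ F ∈ 𝓕, upSet F) ⊆ U) : ∃ F ∈ 𝓕, upSet F ⊆ U := by
  by_contra hcon
  push_neg at hcon
  have hnsub : ∀ F ∈ 𝓕, ¬ F ⊆ U := by
    intro F hF hFU
    obtain ⟨y, hy, hyU⟩ := Set.not_subset.1 (hcon F hF)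
    obtain ⟨f, hfF, hfy⟩ := hy
    exact hyU (hU.1 f (hFU hfF) y hfy)
  obtain ⟨D, hDne, hDdir, hDV, hDmeets⟩ := rudin_avoid ⟨h𝓕.1, h𝓕.2.1, h𝓕.2.2⟩ hU.1 hnsub
  obtain ⟨t, ht⟩ := hdcpo D hDne hDdir
  have htU : t ∈ U := by
    apply hsub
    refine Set.mem_iInter₂.2 (fun F hF => ?_)
    obtain ⟨d, hdD, hdF⟩ := hDmeets F hF
    exact ⟨d, hdF, ht.1 hdD⟩
  obtain ⟨d, hdD, hdU⟩ := hU.2 D hDne hDdir t ht htU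
  exact hDV d hdD hdU

/-- In a dcpo, if `⋂ ↑G ⊆ ↑s` and `F ≪ s` then some `G ⊆ ↑F`. -/
lemma wb_approx [PartialOrder L] (hdcpo : IsDcpo L) {𝓖 : Set (Set L)}
    (h𝓖 : DirectedFamily 𝓖) {s : L} (hsub : (⋂ G ∈ 𝓖, upSet G) ⊆ upSet {s})
    {F : Set L} (hF : WayBelowSet F s) : ∃ G ∈ 𝓖, G ⊆ upSet F := by
  by_contra hcon
  push_neg at hcon
  have hVup : ∀ x ∈ upSet F, ∀ y, x ≤ y → y ∈ upSet F := fun x hx y => upSet_upper hx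
  obtain ⟨D, hDne, hDdir, hDV, hDmeets⟩ := rudin_avoid h𝓖 hVup hcon
  obtain ⟨t, ht⟩ := hdcpo D hDne hDdir
  have hst : s ≤ t := by
    have : t ∈ upSet {s} := by
      apply hsub
      refine Set.mem_iInter₂.2 (fun G hG => ?_)
      obtain ⟨d, hdD, hdG⟩ := hDmeets G hG
      exact ⟨d, hdG, ht.1 hdD⟩
    obtain ⟨a, ha, hat⟩ := this
    exact (Set.mem_singleton_iff.1 ha) ▸ hat
  obtain ⟨d, hdD, hdF⟩ := hF D hDne hDdir t ht hst
  exact hDV d hdD hdF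

/-- Scott opens are exactly the opens of `scottTop`. -/
lemma scottTop_isOpen_iff [Preorder L] {U : Set L} :
    (scottTop L).IsOpen U ↔ ScottOpen U := by
  constructor
  · intro h
    induction h with
    | basic _ hU => exact hU
    | univ => exact ⟨fun _ _ _ _ => trivial, fun D hD _ _ _ _ =>
        hD.mono (Set.subset_inter Set.Subset.rfl (Set.subset_univ D))⟩
    | inter U V _ _ ihU ihV =>
        refine ⟨fun x hx y hxy => ⟨ihU.1 x hx.1 y hxy, ihV.1 x hx.2 y hxy⟩, ?_⟩
        intro D hDne hDdir s hs hsUV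
        obtain ⟨d1, hd1D, hd1U⟩ := ihU.2 D hDne hDdir s hs hsUV.1
        obtain ⟨d2, hd2D, hd2V⟩ := ihV.2 D hDne hDdir s hs hsUV.2
        obtain ⟨d3, hd3D, h13, h23⟩ := hDdir d1 hd1D d2 hd2D
        exact ⟨d3, hd3D, ihU.1 d1 hd1U d3 h13, ihV.1 d2 hd2V d3 h23⟩
    | sUnion 𝔖 _ ih =>
        refine ⟨fun x hx y hxy => ?_, ?_⟩
        · obtain ⟨V, hV𝔖, hxV⟩ := hx
          exact ⟨V, hV𝔖, (ih V hV𝔖).1 x hxV y hxy⟩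
        · intro D hDne hDdir s hs hsU
          obtain ⟨V, hV𝔖, hsV⟩ := hsU
          obtain ⟨d, hdD, hdV⟩ := (ih V hV𝔖).2 D hDne hDdir s hs hsV
          exact ⟨d, hdD, V, hV𝔖, hdV⟩
  · exact fun h => TopologicalSpace.GenerateOpen.basic U h

lemma wayBelowSet_mono [Preorder L] {F : Set L} {x y : L} (h : WayBelowSet F x)
    (hxy : x ≤ y) : WayBelowSet F y :=
  fun D hDne hDdir s hs hys => h D hDne hDdir s hs (hxy.trans hys)

/-- In a quasicontinuous domain `⇑F = {y | F ≪ y}` is Scott open. -/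
lemma scottOpen_wayBelow [PartialOrder L] (hL : QuasicontinuousDomain L) (F : Set L) :
    ScottOpen {y : L | WayBelowSet F y} := by
  refine ⟨fun x hx y hxy => wayBelowSet_mono hx hxy, ?_⟩
  intro D hDne hDdir s hs hFs
  set 𝓖 : Set (Set L) := {G | ∃ d ∈ D, G ∈ finOf d} with h𝓖
  have h𝓖df : DirectedFamily 𝓖 := by
    refine ⟨?_, ?_, ?_⟩
    · obtain ⟨d, hd⟩ := hDne
      obtain ⟨G, hG⟩ := (hL.2 d).1.1
      exact ⟨G, d, hd, hG⟩
    · rintro G ⟨d, _, hG⟩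
      exact ⟨hG.1, hG.2.1⟩
    · rintro E ⟨d1, hd1, hE⟩ G ⟨d2, hd2, hG⟩
      obtain ⟨d3, hd3, h13, h23⟩ := hDdir d1 hd1 d2 hd2
      have hE3 : E ∈ finOf d3 := ⟨hE.1, hE.2.1, wayBelowSet_mono hE.2.2 h13⟩
      have hG3 : G ∈ finOf d3 := ⟨hG.1, hG.2.1, wayBelowSet_mono hG.2.2 h23⟩
      obtain ⟨H, hH, hHsub⟩ := (hL.2 d3).1.2.2 E hE3 G hG3
      exact ⟨H, ⟨d3, hd3, hH⟩, hHsub⟩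
  have hsub : (⋂ G ∈ 𝓖, upSet G) ⊆ upSet {s} := by
    intro y hy
    have hub : y ∈ upperBounds D := by
      intro d hd
      have : y ∈ upSet {d} := by
        rw [(hL.2 d).2]
        refine Set.mem_iInter₂.2 (fun G hG => ?_)
        exact Set.mem_iInter₂.1 hy G ⟨d, hd, hG⟩
      obtain ⟨a, ha, hay⟩ := this
      exact (Set.mem_singleton_iff.1 ha) ▸ hay
    exact ⟨s, rfl, hs.2 hub⟩
  obtain ⟨G, ⟨d, hdD, hGfin⟩, hGF⟩ := wb_approx hL.1 h𝓖df hsub hFs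
  refine ⟨d, hdD, ?_⟩
  intro D' hD'ne hD'dir t ht hdt
  obtain ⟨e, heD', heG⟩ := hGfin.2.2 D' hD'ne hD'dir t ht hdt
  exact ⟨e, heD', upSet_min hGF heG⟩

end Aux

/-- **Theorem 2 (sufficiency).** On a quasicontinuous domain, GZS-convergence coincides
with ideal convergence in the Scott topology; hence it is topological. -/
theorem thm2_sufficiency {L : Type u} [PartialOrder L] (hL : QuasicontinuousDomain L)
    {J : Type v} [Preorder J] (hJ : IsNetIndex J) (xj : J → L)
    (I : Set (Set J)) (hI : IsIdeal I) (x : L) :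
    GZSConv xj I x ↔ IConv (scottTop L) xj I x := by
  constructor
  · rintro ⟨𝓕, hdf, hsub, hmem⟩ U hUopen hxU
    have hScott : ScottOpen U := scottTop_isOpen_iff.1 hUopen
    have hsub' : (⋂ F ∈ 𝓕, upSet F) ⊆ U := by
      intro y hy
      obtain ⟨a, ha, hay⟩ := hsub hy
      exact hScott.1 a ((Set.mem_singleton_iff.1 ha) ▸ hxU) y hay
    obtain ⟨F, hF, hFU⟩ := scott_approx hL.1 hdf hScott hsub'
    refine hI.1 _ (hmem F hF) _ ?_
    intro j hj
    exact fun h => hj (hFU h)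
  · intro h
    refine ⟨finOf x, (hL.2 x).1, ?_, ?_⟩
    · rw [← (hL.2 x).2]
    · intro F hF
      have hopen : (scottTop L).IsOpen {y : L | WayBelowSet F y} :=
        scottTop_isOpen_iff.2 (scottOpen_wayBelow hL F)
      have hmem : {j | xj j ∉ {y : L | WayBelowSet F y}} ∈ I := h _ hopen hF.2.2
      refine hI.1 _ hmem _ ?_
      intro j hj hwb
      exact hj (by
        obtain ⟨d, hd, hdF⟩ := hwb {xj j} ⟨xj j, rfl⟩
          (by rintro a rfl b rfl; exact ⟨xj j, rfl, le_refl _, le_refl _⟩)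
          (xj j) isLUB_singleton (le_refl _)
        exact (Set.mem_singleton_iff.1 hd) ▸ hdF)
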